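/- Canonical-partition form of the recursion: Let x ∈ X, σ ∈ S^G_{<∞} with range c, and let α ≥ 1 be a countable ordinal. Let 𝓑_α = {B_α(y,δ) : y ∈ X, δ ∈ S^G_{<∞}}. Then B_{α+1}(x,σ) = ⋂{V^G_c·B : B ∈ 𝓑_α, V^G_σ·x ∩ B ≠ ∅} ∩ ⋂{X ∖ V^G_c·B : B ∈ 𝓑_α, V^G_σ·x ∩ B = ∅}. Moreover, with 𝓑_{<α} = {B_γ(y,δ) : y ∈ X, δ ∈ S^G_{<∞}, 1 ≤ γ < α} ∪ {A_l : l ∈ ℕ}, one has B_α(x,σ) = ⋂{V^G_c·B : B ∈ 𝓑_{<α}, V^G_σ·x ∩ B ≠ ∅} ∩ ⋂{X ∖ V^G_c·B : B ∈ 𝓑_{<α}, V^G_σ·x ∩ B = ∅}. -/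

import Mathlib

open Set Pointwise

noncomputable section

/-- `S_∞`, the group of all permutations of `ℕ`. -/
abbrev Sinf : Type := Equiv.Perm ℕ

/-- The topology of pointwise convergence on `S_∞`. -/
instance SinfTopology : TopologicalSpace Sinf :=
  TopologicalSpace.induced (fun g : Sinf => (g : ℕ → ℕ)) Pi.topologicalSpace

/-- The graph of the restriction of a permutation `g` to a finite set `d`. -/
def restr (g : Sinf) (d : Finset ℕ) : Set (ℕ × ℕ) := {p | p.1 ∈ d ∧ g p.1 = p.2}

/-- The domain of a partial map coded by its graph. -/
def pdom (σ : Set (ℕ × ℕ)) : Set ℕ := Prod.fst '' σ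

/-- The range of a partial map coded by its graph. -/
def prng (σ : Set (ℕ × ℕ)) : Set ℕ := Prod.snd '' σ

/-- `S^G_{<∞}`: graphs of restrictions of elements of `G` to finite subsets of `ℕ`. -/
def SGfin (G : Subgroup Sinf) : Set (Set (ℕ × ℕ)) :=
  {σ | ∃ g ∈ G, ∃ d : Finset ℕ, σ = restr g d}

/-- `V^G_σ`: the elements of `G` extending the partial bijection `σ`. -/
def Vb (G : Subgroup Sinf) (σ : Set (ℕ × ℕ)) : Set G :=
  {g : G | ∀ p ∈ σ, (g : Sinf) p.1 = p.2}

/-- `V^G_c`: the pointwise stabilizer of `c ⊆ ℕ` in `G`. -/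
def Vc (G : Subgroup Sinf) (c : Set ℕ) : Set G :=
  {g : G | ∀ k ∈ c, (g : Sinf) k = k}

/-- The identity partial bijection on `c`. -/
def idb (c : Set ℕ) : Set (ℕ × ℕ) := {p | p.1 ∈ c ∧ p.2 = p.1}

/-- The composition `σ ∘ f`, restricted to `f⁻¹[dom σ]`. -/
def compR (σ : Set (ℕ × ℕ)) (f : Sinf) : Set (ℕ × ℕ) := {p | (f p.1, p.2) ∈ σ}

/-- The composition `f ∘ σ`. -/
def compL (f : Sinf) (σ : Set (ℕ × ℕ)) : Set (ℕ × ℕ) := {p | (p.1, f⁻¹ p.2) ∈ σ}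

/-- The Borel classes `Σ⁰_α(X)`: `Σ⁰_1(X)` consists of the open sets, and for `α > 1`,
`Σ⁰_α(X)` consists of countable unions of sets whose complements lie in
`⋃_{1 ≤ β < α} Σ⁰_β(X)` (i.e. of sets from `⋃_{1 ≤ β < α} Π⁰_β(X)`). -/
def SigmaB (X : Type*) [TopologicalSpace X] (α : Ordinal.{0}) : Set (Set X) :=
  if α ≤ 1 then {s | IsOpen s}
  else {s | ∃ f : ℕ → Set X,
      (∀ n, ∃ β : {γ : Ordinal.{0} // γ < α}, 1 ≤ β.1 ∧ (f n)ᶜ ∈ SigmaB X β.1) ∧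
      s = ⋃ n, f n}
termination_by α
decreasing_by exact β.2

/-- The Borel classes `Π⁰_α(X)`: complements of sets in `Σ⁰_α(X)`. -/
def PiB (X : Type*) [TopologicalSpace X] (α : Ordinal.{0}) : Set (Set X) :=
  {s | sᶜ ∈ SigmaB X α}

section Action

variable (G : Subgroup Sinf) {X : Type*} [TopologicalSpace X] [MulAction G X]

/-- The image `S • x` of a point under a set of group elements. -/
def setOrb (S : Set G) (x : X) : Set X := (fun g : G => g • x) '' S

/-- The image `S • B` of a set under a set of group elements. -/
def setSmul (S : Set G) (B : Set X) : Set X := ⋃ g ∈ S, g • B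

/-- The `1`-sets `B₁(x, σ)`. -/
def BsetOne (A : ℕ → Set X) (σ : Set (ℕ × ℕ)) (x : X) : Set X :=
  (⋂ l, ⋂ (_ : (setOrb G (Vb G σ) x ∩ A l).Nonempty), setSmul G (Vc G (prng σ)) (A l)) ∩
    (⋂ l, ⋂ (_ : setOrb G (Vb G σ) x ∩ A l = ∅), (setSmul G (Vc G (prng σ)) (A l))ᶜ)

/-- The successor step of the recursion defining the `α`-sets. -/
def BsetSucc (prev : Set (ℕ × ℕ) → X → Set X) (σ : Set (ℕ × ℕ)) (x : X) : Set X :=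
  (⋂ b : Finset ℕ, ⋂ (_ : pdom σ ⊆ ↑b),
      ⋃ σ' ∈ SGfin G, ⋃ (_ : σ ⊆ σ') (_ : pdom σ' = ↑b), prev σ' x) ∩
    (⋂ a : Finset ℕ, ⋂ (_ : prng σ ⊆ ↑a),
      ⋃ σ' ∈ SGfin G, ⋃ (_ : σ ⊆ σ') (_ : prng σ' = ↑a), prev σ' x)

/-- The `α`-sets `B_α(x, σ)`, for `α ≥ 1` (the value at `α = 0` is junk). -/
def Bset (A : ℕ → Set X) (α : Ordinal.{0}) : Set (ℕ × ℕ) → X → Set X :=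
  @Ordinal.limitRecOn (fun _ => Set (ℕ × ℕ) → X → Set X) α
    (fun _ _ => univ)
    (fun o ih => if o = 0 then BsetOne G A else BsetSucc G ih)
    (fun o _ ih σ x => ⋂ β : Ordinal.{0}, ⋂ (hβ : β < o), ⋂ (_ : 1 ≤ β), ih β hβ σ x)

/-- The family `𝓑^x_{<α}` consisting of the basic open sets together with all
`β`-sets of `x` for `1 ≤ β < α`. -/
def BltFam (A : ℕ → Set X) (x : X) (α : Ordinal.{0}) : Set (Set X) :=
  {B | (∃ l, B = A l) ∨
    ∃ β : Ordinal.{0}, 1 ≤ β ∧ β < α ∧ ∃ σ ∈ SGfin G, B = Bset G A β σ x}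

/-- `γ^G_*(x)`: the least countable ordinal `γ` such that for all `σ, δ ∈ S^G_{<∞}`
with equal ranges, if `B_α(x,σ) ≠ B_α(x,δ)` for some countable ordinal `α ≥ 1`,
then already `B_γ(x,σ) ≠ B_γ(x,δ)`. -/
def gammaStar (A : ℕ → Set X) (x : X) : Ordinal :=
  sInf {γ : Ordinal.{0} | γ.card ≤ Cardinal.aleph0 ∧
    ∀ σ ∈ SGfin G, ∀ δ ∈ SGfin G, prng σ = prng δ →
      (∃ α : Ordinal.{0}, 1 ≤ α ∧ α.card ≤ Cardinal.aleph0 ∧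
        Bset G A α σ x ≠ Bset G A α δ x) →
      Bset G A γ σ x ≠ Bset G A γ δ x}

end Action

/-- The topology on a subset `S ⊆ X` generated by the traces on `S` of the members
of the family `F`. -/
def traceTop {X : Type*} (S : Set X) (F : Set (Set X)) : TopologicalSpace S :=
  TopologicalSpace.generateFrom {u : Set S | ∃ B ∈ F, u = Subtype.val ⁻¹' B}

/-- The space of closed subsets of `Y`. -/
def EffrosSpace (Y : Type*) [TopologicalSpace Y] := {K : Set Y // IsClosed K}

/-- The Effros Borel structure on the space of closed subsets of `Y`. -/
def effrosSigma (Y : Type*) [TopologicalSpace Y] : MeasurableSpace (EffrosSpace Y) :=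
  MeasurableSpace.generateFrom
    {S | ∃ U : Set Y, IsOpen U ∧ S = {K : EffrosSpace Y | (K.1 ∩ U).Nonempty}}

/-!
One proves by simultaneous induction on `α ≥ 1` that, for `c = rng σ`,
`y ∈ B_α(x,σ)` iff `V_c·y` and `V_σ·x` meet the same members of `𝓑_{<α}`, and that
`h·B_α(x,σ) = B_α(x,h∘σ)` for `h ∈ G`. Equivariance follows from the characterisation because
meeting the same members of `𝓑_{<α}` is a `G`-invariant relation: a translate of a basic set is
open, hence a union of basic sets, and a translate of a `γ`-set is again a `γ`-set. At a successor
`β + 1` the new members of `𝓑_{<β+1}` are the `β`-sets `B_β(z,δ)`, and witnesses for meeting them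
are moved between `V_c·y` and `V_σ·x` by extending `σ` in domain or range far enough to absorb
the relevant translate of `rng δ`. Finally every member of `𝓑_{<α+1}` is a union of sets
`B_α(w, id_c)`, with `c` coming from the invariance of the basic sets, which turns the
characterisation at `α + 1` into the one with respect to the `α`-sets.
-/

open TopologicalSpace Order

section PartialBijections

variable {G : Subgroup Sinf}

lemma Vc_eq_fixingSubgroup (c : Set ℕ) : Vc G c = fixingSubgroup G c :=
  Set.ext fun _ => (mem_fixingSubgroup_iff G).symm

lemma one_mem_Vc (c : Set ℕ) : (1 : G) ∈ Vc G c := by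
  rw [Vc_eq_fixingSubgroup]; exact Subgroup.one_mem _

lemma mul_mem_Vc {c : Set ℕ} {g h : G} (hg : g ∈ Vc G c) (hh : h ∈ Vc G c) : g * h ∈ Vc G c := by
  rw [Vc_eq_fixingSubgroup] at hg hh ⊢; exact Subgroup.mul_mem _ hg hh

lemma inv_mem_Vc {c : Set ℕ} {g : G} (hg : g ∈ Vc G c) : g⁻¹ ∈ Vc G c := by
  rw [Vc_eq_fixingSubgroup] at hg ⊢; exact Subgroup.inv_mem _ hg

lemma mem_prng {σ : Set (ℕ × ℕ)} {p : ℕ × ℕ} (hp : p ∈ σ) : p.2 ∈ prng σ := ⟨p, hp, rfl⟩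

lemma mem_pdom {σ : Set (ℕ × ℕ)} {p : ℕ × ℕ} (hp : p ∈ σ) : p.1 ∈ pdom σ := ⟨p, hp, rfl⟩

lemma Vb_mono {σ τ : Set (ℕ × ℕ)} (h : σ ⊆ τ) : Vb G τ ⊆ Vb G σ :=
  fun _ hg p hp => hg p (h hp)

lemma apply_mem_prng_of_mem_Vb {σ : Set (ℕ × ℕ)} {g : G} (hg : g ∈ Vb G σ) {k : ℕ}
    (hk : k ∈ pdom σ) : (g : Sinf) k ∈ prng σ := by
  obtain ⟨p, hp, rfl⟩ := hk
  rw [hg p hp]; exact mem_prng hp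

lemma mul_mem_Vb {σ : Set (ℕ × ℕ)} {u g : G} (hu : u ∈ Vc G (prng σ)) (hg : g ∈ Vb G σ) :
    u * g ∈ Vb G σ := by
  intro p hp
  simp only [Subgroup.coe_mul, Equiv.Perm.mul_apply, hg p hp]
  exact hu p.2 (mem_prng hp)

lemma mul_inv_mem_Vc {σ : Set (ℕ × ℕ)} {g h : G} (hg : g ∈ Vb G σ) (hh : h ∈ Vb G σ) :
    g * h⁻¹ ∈ Vc G (prng σ) := by
  rintro _ ⟨p, hp, rfl⟩
  have hh' : (h : Sinf)⁻¹ p.2 = p.1 := Equiv.Perm.inv_eq_iff_eq.2 (hh p hp).symm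
  simp only [Subgroup.coe_mul, Subgroup.coe_inv, Equiv.Perm.mul_apply, hh', hg p hp]

lemma restr_mem_SGfin (g : G) (d : Finset ℕ) : restr g d ∈ SGfin G := ⟨g, g.2, d, rfl⟩

lemma mem_Vb_restr (g : G) (d : Finset ℕ) : g ∈ Vb G (restr g d) := fun _ hp => hp.2

lemma pdom_restr (g : Sinf) (d : Finset ℕ) : pdom (restr g d) = d := by
  ext k
  exact ⟨fun ⟨p, hp, hpk⟩ => hpk ▸ hp.1, fun hk => ⟨(k, g k), ⟨hk, rfl⟩, rfl⟩⟩

lemma prng_restr (g : Sinf) (d : Finset ℕ) : prng (restr g d) = g '' d := by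
  ext m
  exact ⟨fun ⟨p, hp, hpm⟩ => ⟨p.1, hp.1, hp.2.trans hpm⟩,
    fun ⟨k, hk, hkm⟩ => ⟨(k, g k), ⟨hk, rfl⟩, hkm⟩⟩

lemma subset_restr {σ : Set (ℕ × ℕ)} {g : G} (hg : g ∈ Vb G σ) {b : Finset ℕ}
    (hb : pdom σ ⊆ b) : σ ⊆ restr g b :=
  fun p hp => ⟨hb (mem_pdom hp), hg p hp⟩

lemma prng_restr_image_inv (g : Sinf) (a : Finset ℕ) : prng (restr g (a.image ⇑g⁻¹)) = a := by
  rw [prng_restr, Finset.coe_image, Set.image_image]; simp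

lemma subset_restr_image_inv {σ : Set (ℕ × ℕ)} {g : G} (hg : g ∈ Vb G σ) {a : Finset ℕ}
    (ha : prng σ ⊆ a) : σ ⊆ restr g (a.image ⇑(g : Sinf)⁻¹) := by
  refine subset_restr hg fun k hk => ?_
  exact Finset.mem_image.2 ⟨_, ha (apply_mem_prng_of_mem_Vb hg hk), by simp⟩

lemma exists_mem_Vb {σ : Set (ℕ × ℕ)} (hσ : σ ∈ SGfin G) : ∃ g : G, g ∈ Vb G σ := by
  obtain ⟨g, hg, d, rfl⟩ := hσ
  exact ⟨⟨g, hg⟩, mem_Vb_restr ⟨g, hg⟩ d⟩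

lemma finite_pdom {σ : Set (ℕ × ℕ)} (hσ : σ ∈ SGfin G) : (pdom σ).Finite := by
  obtain ⟨g, _, d, rfl⟩ := hσ
  rw [pdom_restr]; exact d.finite_toSet

lemma finite_prng {σ : Set (ℕ × ℕ)} (hσ : σ ∈ SGfin G) : (prng σ).Finite := by
  obtain ⟨g, _, d, rfl⟩ := hσ
  rw [prng_restr]; exact d.finite_toSet.image _

lemma eq_of_subset_of_pdom_subset {σ τ : Set (ℕ × ℕ)} (hτ : τ ∈ SGfin G) (hστ : σ ⊆ τ)
    (hdom : pdom τ ⊆ pdom σ) : τ = σ := by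
  obtain ⟨g, -, d, rfl⟩ := hτ
  refine (Set.Subset.antisymm ?_ hστ)
  rintro p ⟨hpd, hpg⟩
  obtain ⟨q, hq, hqp⟩ := hdom ⟨p, ⟨hpd, hpg⟩, rfl⟩
  have hq2 : g q.1 = q.2 := (hστ hq).2
  obtain rfl : q = p := Prod.ext hqp (by rw [← hq2, ← hpg, hqp])
  exact hq

lemma idb_mem_SGfin (c : Finset ℕ) : idb c ∈ SGfin G := by
  refine ⟨1, G.one_mem, c, ?_⟩
  ext p
  exact and_congr_right fun _ => eq_comm

lemma prng_idb (c : Set ℕ) : prng (idb c) = c := by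
  ext m
  exact ⟨fun ⟨p, hp, hpm⟩ => hpm ▸ hp.2 ▸ hp.1, fun hm => ⟨(m, m), ⟨hm, rfl⟩, rfl⟩⟩

lemma Vb_idb (c : Set ℕ) : Vb G (idb c) = Vc G c := by
  ext g
  exact ⟨fun h k hk => h (k, k) ⟨hk, rfl⟩, fun h p hp => hp.2 ▸ h p.1 hp.1⟩

lemma compL_mem_SGfin (h : G) {σ : Set (ℕ × ℕ)} (hσ : σ ∈ SGfin G) : compL h σ ∈ SGfin G := by
  obtain ⟨g, hg, d, rfl⟩ := hσ
  refine ⟨h * g, G.mul_mem h.2 hg, d, ?_⟩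
  ext p
  simp only [compL, restr, Set.mem_ofPred_eq, Equiv.Perm.mul_apply, Equiv.Perm.eq_inv_iff_eq]

lemma pdom_compL (f : Sinf) (σ : Set (ℕ × ℕ)) : pdom (compL f σ) = pdom σ := by
  ext k
  refine ⟨fun ⟨p, hp, hpk⟩ => ⟨_, hp, hpk⟩, fun ⟨p, hp, hpk⟩ => ⟨(p.1, f p.2), ?_, hpk⟩⟩
  simpa [compL] using hp

lemma prng_compL (f : Sinf) (σ : Set (ℕ × ℕ)) : prng (compL f σ) = f '' prng σ := by
  ext m
  refine ⟨fun ⟨p, hp, hpm⟩ => ⟨f⁻¹ p.2, ⟨_, hp, rfl⟩, by simp [← hpm]⟩, ?_⟩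
  rintro ⟨_, ⟨p, hp, rfl⟩, rfl⟩
  exact ⟨(p.1, f p.2), by simpa [compL] using hp, rfl⟩

lemma mem_Vb_compL {h g : G} {σ : Set (ℕ × ℕ)} : g ∈ Vb G (compL h σ) ↔ h⁻¹ * g ∈ Vb G σ := by
  constructor
  · intro hg q hq
    have hgq := hg (q.1, (h : Sinf) q.2) (by simpa [compL] using hq)
    simp [hgq]
  · intro hg p hp
    simpa using hg _ hp

lemma subset_compL {σ τ : Set (ℕ × ℕ)} (hστ : σ ⊆ τ) {h : G} (hh : h ∈ Vc G (prng σ)) :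
    σ ⊆ compL h τ := by
  intro p hp
  have : (h : Sinf)⁻¹ p.2 = p.2 := by
    rw [Equiv.Perm.inv_eq_iff_eq]; exact (hh p.2 (mem_prng hp)).symm
  show (p.1, (h : Sinf)⁻¹ p.2) ∈ τ
  rw [this]; exact hστ hp

end PartialBijections

section Orbits

variable {G : Subgroup Sinf} {X : Type*} [MulAction G X]

lemma smul_inter_nonempty_iff_inter_inv_smul (g : G) (S B : Set X) :
    (g • S ∩ B).Nonempty ↔ (S ∩ g⁻¹ • B).Nonempty := by
  rw [← Set.smul_set_nonempty (a := g⁻¹), Set.smul_set_inter, inv_smul_smul]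

lemma mem_setOrb_Vc_self (c : Set ℕ) (y : X) : y ∈ setOrb G (Vc G c) y :=
  ⟨1, one_mem_Vc c, one_smul G y⟩

lemma mem_setSmul_Vc_iff {c : Set ℕ} {B : Set X} {y : X} :
    y ∈ setSmul G (Vc G c) B ↔ (setOrb G (Vc G c) y ∩ B).Nonempty := by
  simp only [setSmul, Set.mem_iUnion, Set.mem_smul_set_iff_inv_smul_mem]
  constructor
  · rintro ⟨g, hg, hgy⟩
    exact ⟨g⁻¹ • y, ⟨g⁻¹, inv_mem_Vc hg, rfl⟩, hgy⟩
  · rintro ⟨_, ⟨g, hg, rfl⟩, hgy⟩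
    exact ⟨g⁻¹, inv_mem_Vc hg, by rwa [inv_inv]⟩

lemma setOrb_Vb_eq {σ : Set (ℕ × ℕ)} {g : G} (hg : g ∈ Vb G σ) (x : X) :
    setOrb G (Vb G σ) x = setOrb G (Vc G (prng σ)) (g • x) := by
  ext z
  constructor
  · rintro ⟨h, hh, rfl⟩
    exact ⟨h * g⁻¹, mul_inv_mem_Vc hh hg, by simp only [smul_smul, inv_mul_cancel_right]⟩
  · rintro ⟨u, hu, rfl⟩
    exact ⟨u * g, mul_mem_Vb hu hg, mul_smul u g x⟩

lemma setOrb_Vb_compL (h : G) (σ : Set (ℕ × ℕ)) (z : X) :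
    setOrb G (Vb G (compL h σ)) z = h • setOrb G (Vb G σ) z := by
  ext w
  constructor
  · rintro ⟨u, hu, rfl⟩
    exact ⟨(h⁻¹ * u) • z, ⟨_, mem_Vb_compL.1 hu, rfl⟩,
      by simp only [smul_smul, mul_inv_cancel_left]⟩
  · rintro ⟨_, ⟨v, hv, rfl⟩, rfl⟩
    exact ⟨h * v, mem_Vb_compL.2 (by rwa [inv_mul_cancel_left]), mul_smul h v z⟩

lemma setOrb_Vc_image (h : G) (c : Set ℕ) (y : X) :
    setOrb G (Vc G ((h : Sinf) '' c)) y = h • setOrb G (Vc G c) (h⁻¹ • y) := by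
  ext w
  constructor
  · rintro ⟨u, hu, rfl⟩
    refine ⟨(h⁻¹ * u * h) • h⁻¹ • y, ⟨h⁻¹ * u * h, fun k hk => ?_, rfl⟩, ?_⟩
    · simp [hu _ ⟨k, hk, rfl⟩]
    · simp only [smul_smul]; group
  · rintro ⟨_, ⟨v, hv, rfl⟩, rfl⟩
    refine ⟨h * v * h⁻¹, ?_, by simp only [smul_smul]; group⟩
    rintro _ ⟨k, hk, rfl⟩
    simp [hv k hk]

/-- `hk` says that conjugation by `k` maps `V_a` into `V_c`. -/
lemma setOrb_Vc_smul_eq_biUnion {a c : Set ℕ} {k : G} (hk : ∀ m ∈ c, (k : Sinf)⁻¹ m ∈ a)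
    (y : X) : setOrb G (Vc G c) (k • y) = ⋃ u ∈ Vc G c, (u * k) • setOrb G (Vc G a) y := by
  ext w
  simp only [Set.mem_iUnion]
  constructor
  · rintro ⟨u, hu, rfl⟩
    exact ⟨u, hu, y, mem_setOrb_Vc_self a y, by simp only [smul_smul]⟩
  · rintro ⟨u, hu, _, ⟨v, hv, rfl⟩, rfl⟩
    have hconj : k * v * k⁻¹ ∈ Vc G c := fun m hm => by
      simp only [Subgroup.coe_mul, Subgroup.coe_inv, Equiv.Perm.mul_apply, hv _ (hk m hm)]
      simp
    refine ⟨u * (k * v * k⁻¹), mul_mem_Vc hu hconj, ?_⟩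
    simp only [smul_smul]; group

end Orbits

def MeetEquiv {X : Type*} (F : Set (Set X)) (S T : Set X) : Prop :=
  ∀ B ∈ F, (S ∩ B).Nonempty ↔ (T ∩ B).Nonempty

namespace MeetEquiv

variable {X : Type*} {F F' : Set (Set X)} {S T U : Set X}

@[refl] lemma refl (F : Set (Set X)) (S : Set X) : MeetEquiv F S S := fun _ _ => Iff.rfl

@[symm] lemma symm (h : MeetEquiv F S T) : MeetEquiv F T S := fun B hB => (h B hB).symm

@[trans] lemma trans (h : MeetEquiv F S T) (h' : MeetEquiv F T U) : MeetEquiv F S U :=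
  fun B hB => (h B hB).trans (h' B hB)

lemma mono (h : MeetEquiv F S T) (hF : F' ⊆ F) : MeetEquiv F' S T := fun B hB => h B (hF hB)

lemma of_refines (href : ∀ B ∈ F', ∀ w ∈ B, ∃ B' ∈ F, w ∈ B' ∧ B' ⊆ B)
    (h : MeetEquiv F S T) : MeetEquiv F' S T := by
  have key : ∀ {S T : Set X}, MeetEquiv F S T → ∀ B ∈ F', (S ∩ B).Nonempty → (T ∩ B).Nonempty := by
    rintro S T h B hB ⟨w, hwS, hwB⟩
    obtain ⟨B', hB', hwB', hB'B⟩ := href B hB w hwB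
    obtain ⟨w', hw'T, hw'B'⟩ := (h B' hB').1 ⟨w, hwS, hwB'⟩
    exact ⟨w', hw'T, hB'B hw'B'⟩
  exact fun B hB => ⟨key h B hB, key h.symm B hB⟩

lemma isOpen [TopologicalSpace X] {A : ℕ → Set X} (hbasis : IsTopologicalBasis (Set.range A))
    (h : MeetEquiv (Set.range A) S T) : MeetEquiv {U | IsOpen U} S T :=
  h.of_refines fun _ hU _ hw => hbasis.exists_subset_of_mem_open hw hU

end MeetEquiv

lemma biInter_setSmul_inter_biInter_compl {G : Subgroup Sinf} {X : Type*} [MulAction G X]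
    (F : Set (Set X)) (c : Set ℕ) (T : Set X) :
    (⋂ B ∈ F, ⋂ (_ : (T ∩ B).Nonempty), setSmul G (Vc G c) B) ∩
        (⋂ B ∈ F, ⋂ (_ : T ∩ B = ∅), (setSmul G (Vc G c) B)ᶜ) =
      {y | MeetEquiv F (setOrb G (Vc G c) y) T} := by
  ext y
  simp only [Set.mem_inter_iff, Set.mem_iInter, Set.mem_compl_iff, mem_setSmul_Vc_iff,
    ← Set.not_nonempty_iff_eq_empty, Set.mem_ofPred_eq, MeetEquiv, ← forall₂_and]
  exact forall₂_congr fun _ _ => by tauto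

lemma mem_BsetSucc_iff {G : Subgroup Sinf} {X : Type*} {prev : Set (ℕ × ℕ) → X → Set X}
    {σ : Set (ℕ × ℕ)} {x y : X} :
    y ∈ BsetSucc G prev σ x ↔
      (∀ b : Finset ℕ, pdom σ ⊆ b → ∃ σ' ∈ SGfin G, σ ⊆ σ' ∧ pdom σ' = b ∧ y ∈ prev σ' x) ∧
        ∀ a : Finset ℕ, prng σ ⊆ a → ∃ σ' ∈ SGfin G, σ ⊆ σ' ∧ prng σ' = a ∧ y ∈ prev σ' x := by
  simp only [BsetSucc, Set.mem_inter_iff, Set.mem_iInter, Set.mem_iUnion, exists_prop]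

section AlphaSets

variable {G : Subgroup Sinf} {X : Type*} [MulAction G X] {A : ℕ → Set X}

lemma Bset_one : Bset G A 1 = BsetOne G A := by
  rw [Bset, ← zero_add (1 : Ordinal), Ordinal.limitRecOn_add_one, if_pos rfl]

lemma Bset_add_one {α : Ordinal.{0}} (hα : α ≠ 0) : Bset G A (α + 1) = BsetSucc G (Bset G A α) := by
  rw [Bset, Ordinal.limitRecOn_add_one, if_neg hα]; rfl

lemma Bset_of_isSuccLimit {α : Ordinal.{0}} (hα : IsSuccLimit α) (σ : Set (ℕ × ℕ)) (x : X) :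
    Bset G A α σ x = ⋂ β, ⋂ (_ : β < α), ⋂ (_ : 1 ≤ β), Bset G A β σ x := by
  rw [Bset, Ordinal.limitRecOn_limit _ _ _ _ hα]; rfl

variable (G A) in
/-- The family `𝓑_{<α}`. -/
def lowerFam (α : Ordinal.{0}) : Set (Set X) :=
  {B | (∃ l, B = A l) ∨
    ∃ γ : Ordinal.{0}, 1 ≤ γ ∧ γ < α ∧ ∃ y : X, ∃ δ ∈ SGfin G, B = Bset G A γ δ y}

lemma lowerFam_mono {α β : Ordinal.{0}} (h : α ≤ β) : lowerFam G A α ⊆ lowerFam G A β := by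
  rintro B (hB | ⟨γ, h1, hγ, hB⟩)
  exacts [Or.inl hB, Or.inr ⟨γ, h1, hγ.trans_le h, hB⟩]

lemma mem_lowerFam_of_mem_range {α : Ordinal.{0}} {B : Set X} (hB : B ∈ Set.range A) :
    B ∈ lowerFam G A α :=
  Or.inl (hB.imp fun _ => Eq.symm)

lemma Bset_mem_lowerFam {α γ : Ordinal.{0}} (h1 : 1 ≤ γ) (hγ : γ < α) {δ : Set (ℕ × ℕ)}
    (hδ : δ ∈ SGfin G) (y : X) : Bset G A γ δ y ∈ lowerFam G A α :=
  Or.inr ⟨γ, h1, hγ, y, δ, hδ, rfl⟩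

lemma lowerFam_one : lowerFam G A 1 = Set.range A := by
  ext B
  refine ⟨?_, mem_lowerFam_of_mem_range⟩
  rintro (⟨l, rfl⟩ | ⟨γ, h1, hγ, -⟩)
  exacts [⟨l, rfl⟩, absurd hγ h1.not_gt]

lemma mem_lowerFam_add_one {β : Ordinal.{0}} {B : Set X} (hB : B ∈ lowerFam G A (β + 1)) :
    B ∈ lowerFam G A β ∨ ∃ y : X, ∃ δ ∈ SGfin G, B = Bset G A β δ y := by
  rcases hB with hB | ⟨γ, h1, hγ, hB⟩
  · exact Or.inl (Or.inl hB)
  rcases (Order.lt_add_one_iff.1 hγ).lt_or_eq with hγ | rfl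
  exacts [Or.inl (Or.inr ⟨γ, h1, hγ, hB⟩), Or.inr hB]

lemma exists_mem_lowerFam_of_isSuccLimit {α : Ordinal.{0}} (hα : IsSuccLimit α) {B : Set X}
    (hB : B ∈ lowerFam G A α) : ∃ β, 1 ≤ β ∧ β < α ∧ B ∈ lowerFam G A β := by
  rcases hB with hB | ⟨γ, h1, hγ, hB⟩
  · exact ⟨1, le_rfl, Ordinal.one_lt_of_isSuccLimit hα, Or.inl hB⟩
  · exact ⟨γ + 1, h1.trans (le_add_right le_rfl), hα.add_one_lt hγ,
      Or.inr ⟨γ, h1, lt_add_one γ, hB⟩⟩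

variable (G A) in
def BsetCanonical (α : Ordinal.{0}) : Prop :=
  ∀ σ ∈ SGfin G, ∀ x y : X, y ∈ Bset G A α σ x ↔
    MeetEquiv (lowerFam G A α) (setOrb G (Vc G (prng σ)) y) (setOrb G (Vb G σ) x)

variable (G A) in
def BsetEquivariant (α : Ordinal.{0}) : Prop :=
  ∀ h : G, ∀ σ ∈ SGfin G, ∀ z : X, h • Bset G A α σ z = Bset G A α (compL h σ) z

lemma bsetCanonical_one : BsetCanonical G A 1 := by
  intro σ _ x y
  have h := biInter_setSmul_inter_biInter_compl (G := G) (Set.range A) (prng σ)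
    (setOrb G (Vb G σ) x)
  simp only [Set.biInter_range] at h
  rw [Bset_one, BsetOne, h, lowerFam_one]
  rfl

lemma bsetCanonical_of_isSuccLimit {α : Ordinal.{0}} (hα : IsSuccLimit α)
    (hC : ∀ β, 1 ≤ β → β < α → BsetCanonical G A β) : BsetCanonical G A α := by
  intro σ hσ x y
  simp only [Bset_of_isSuccLimit hα, Set.mem_iInter]
  constructor
  · intro hy B hB
    obtain ⟨β, h1, hβ, hB⟩ := exists_mem_lowerFam_of_isSuccLimit hα hB
    exact (hC β h1 hβ σ hσ x y).1 (hy β hβ h1) B hB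
  · intro hy β hβ h1
    exact (hC β h1 hβ σ hσ x y).2 (hy.mono (lowerFam_mono hβ.le))

lemma mem_Bset_idb_iff {α : Ordinal.{0}} (hC : BsetCanonical G A α) (c : Finset ℕ) (x y : X) :
    y ∈ Bset G A α (idb c) x ↔
      MeetEquiv (lowerFam G A α) (setOrb G (Vc G c) y) (setOrb G (Vc G c) x) := by
  rw [hC _ (idb_mem_SGfin c), prng_idb, Vb_idb]

lemma Bset_add_one_subset {β : Ordinal.{0}} (hβ : β ≠ 0) {σ : Set (ℕ × ℕ)} (hσ : σ ∈ SGfin G)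
    (x : X) : Bset G A (β + 1) σ x ⊆ Bset G A β σ x := by
  intro y hy
  rw [Bset_add_one hβ, mem_BsetSucc_iff] at hy
  obtain ⟨b, hb⟩ := (finite_pdom hσ).exists_finset_coe
  obtain ⟨σ', hσ', hσσ', hdom, hy'⟩ := hy.1 b hb.ge
  rwa [eq_of_subset_of_pdom_subset hσ' hσσ' (hdom.trans hb).le] at hy'

lemma mem_Bset_add_one_of_meetEquiv {β : Ordinal.{0}} {σ : Set (ℕ × ℕ)} {x y : X} (hβ : 1 ≤ β)
    (hC : BsetCanonical G A β) (hE : BsetEquivariant G A β) (hσ : σ ∈ SGfin G)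
    (hy : MeetEquiv (lowerFam G A (β + 1)) (setOrb G (Vc G (prng σ)) y) (setOrb G (Vb G σ) x)) :
    y ∈ Bset G A (β + 1) σ x := by
  rw [Bset_add_one (Order.one_le_iff_ne_zero.1 hβ), mem_BsetSucc_iff]
  refine ⟨fun b hb => ?_, fun a ha => ?_⟩
  · obtain ⟨g, hg⟩ := exists_mem_Vb hσ
    have hτ := restr_mem_SGfin g b
    have hgx : g • x ∈ Bset G A β (restr g b) x := by
      rw [hC _ hτ, setOrb_Vb_eq (mem_Vb_restr g b)]
    obtain ⟨_, ⟨h, hh, rfl⟩, hhy⟩ :=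
      (hy _ (Bset_mem_lowerFam hβ (lt_add_one β) hτ x)).2 ⟨g • x, ⟨g, hg, rfl⟩, hgx⟩
    refine ⟨compL (h⁻¹ : G) (restr g b), compL_mem_SGfin _ hτ,
      subset_compL (subset_restr hg hb) (inv_mem_Vc hh), by rw [pdom_compL, pdom_restr], ?_⟩
    rw [← hE h⁻¹ _ hτ x, Set.mem_smul_set_iff_inv_smul_mem, inv_inv]
    exact hhy
  · have hyy : y ∈ Bset G A β (idb a) y := (mem_Bset_idb_iff hC a y y).2 (.refl _ _)
    obtain ⟨_, ⟨g, hg, rfl⟩, hgy⟩ := (hy _ (Bset_mem_lowerFam hβ (lt_add_one β)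
      (idb_mem_SGfin a) y)).1 ⟨y, mem_setOrb_Vc_self _ y, hyy⟩
    have hτ := restr_mem_SGfin g (a.image ⇑(g : Sinf)⁻¹)
    refine ⟨_, hτ, subset_restr_image_inv hg ha, prng_restr_image_inv _ a, ?_⟩
    rw [hC _ hτ, setOrb_Vb_eq (mem_Vb_restr _ _), prng_restr_image_inv]
    exact ((mem_Bset_idb_iff hC a y _).1 hgy).symm

lemma exists_Bset_subset_of_mem_lowerFam_add_one
    (hbasisInv : ∀ l, ∃ c : Finset ℕ, ∀ g ∈ Vc G (↑c : Set ℕ), g • A l = A l)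
    {α : Ordinal.{0}} (hα : 1 ≤ α) (hC : ∀ γ, 1 ≤ γ → γ ≤ α → BsetCanonical G A γ)
    {B : Set X} (hB : B ∈ lowerFam G A (α + 1)) {w : X} (hw : w ∈ B) :
    ∃ B' ∈ {B | ∃ y : X, ∃ δ ∈ SGfin G, B = Bset G A α δ y}, w ∈ B' ∧ B' ⊆ B := by
  have hCα := hC α hα le_rfl
  have key (c : Finset ℕ) (hc : ∀ w',
      MeetEquiv (lowerFam G A α) (setOrb G (Vc G c) w') (setOrb G (Vc G c) w) → w' ∈ B) :
      ∃ B' ∈ {B | ∃ y : X, ∃ δ ∈ SGfin G, B = Bset G A α δ y}, w ∈ B' ∧ B' ⊆ B :=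
    ⟨Bset G A α (idb c) w, ⟨w, _, idb_mem_SGfin c, rfl⟩, (mem_Bset_idb_iff hCα c w w).2 (.refl _ _),
      fun w' hw' => hc w' ((mem_Bset_idb_iff hCα c w w').1 hw')⟩
  rcases hB with ⟨l, rfl⟩ | ⟨γ, h1, hγ, z, δ, hδ, rfl⟩
  · obtain ⟨c, hc⟩ := hbasisInv l
    refine key c fun w' hw' => ?_
    obtain ⟨_, ⟨u, hu, rfl⟩, huA⟩ := (hw' (A l) (mem_lowerFam_of_mem_range ⟨l, rfl⟩)).2
      ⟨w, mem_setOrb_Vc_self _ w, hw⟩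
    rw [← hc u⁻¹ (inv_mem_Vc hu), Set.mem_smul_set_iff_inv_smul_mem, inv_inv]
    exact huA
  · obtain ⟨c, hc⟩ := (finite_prng hδ).exists_finset_coe
    have hγα := Order.lt_add_one_iff.1 hγ
    refine key c fun w' hw' => ?_
    rw [hC γ h1 hγα δ hδ z, ← hc] at hw ⊢
    exact (hw'.mono (lowerFam_mono hγα)).trans hw

lemma meetEquiv_lowerFam_add_one_iff
    (hbasisInv : ∀ l, ∃ c : Finset ℕ, ∀ g ∈ Vc G (↑c : Set ℕ), g • A l = A l)
    {α : Ordinal.{0}} (hα : 1 ≤ α) (hC : ∀ γ, 1 ≤ γ → γ ≤ α → BsetCanonical G A γ)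
    {S T : Set X} : MeetEquiv (lowerFam G A (α + 1)) S T ↔
      MeetEquiv {B | ∃ y : X, ∃ δ ∈ SGfin G, B = Bset G A α δ y} S T := by
  refine ⟨fun h => h.mono ?_, MeetEquiv.of_refines fun B hB w hw =>
    exists_Bset_subset_of_mem_lowerFam_add_one hbasisInv hα hC hB hw⟩
  rintro _ ⟨y, δ, hδ, rfl⟩
  exact Bset_mem_lowerFam hα (lt_add_one α) hδ y

end AlphaSets

section Canonical

variable {G : Subgroup Sinf} {X : Type*} [TopologicalSpace X] [MulAction G X]
  [ContinuousConstSMul G X] {A : ℕ → Set X}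

lemma MeetEquiv.smul_lowerFam (hbasis : IsTopologicalBasis (Set.range A)) {α : Ordinal.{0}}
    (hE : ∀ γ, 1 ≤ γ → γ < α → BsetEquivariant G A γ) {S T : Set X}
    (h : MeetEquiv (lowerFam G A α) S T) (g : G) :
    MeetEquiv (lowerFam G A α) (g • S) (g • T) := by
  intro B hB
  rw [smul_inter_nonempty_iff_inter_inv_smul, smul_inter_nonempty_iff_inter_inv_smul]
  rcases hB with ⟨l, rfl⟩ | ⟨γ, h1, hγ, z, δ, hδ, rfl⟩
  · exact (h.mono fun _ => mem_lowerFam_of_mem_range).isOpen hbasis _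
      ((hbasis.isOpen ⟨l, rfl⟩).smul g⁻¹)
  · rw [hE γ h1 hγ g⁻¹ δ hδ z]
    exact h _ (Bset_mem_lowerFam h1 hγ (compL_mem_SGfin _ hδ) z)

lemma meetEquiv_lowerFam_smul_iff (hbasis : IsTopologicalBasis (Set.range A)) {α : Ordinal.{0}}
    (hE : ∀ γ, 1 ≤ γ → γ < α → BsetEquivariant G A γ) {S T : Set X} (g : G) :
    MeetEquiv (lowerFam G A α) (g • S) (g • T) ↔ MeetEquiv (lowerFam G A α) S T := by
  refine ⟨fun h => ?_, fun h => h.smul_lowerFam hbasis hE g⟩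
  simpa only [inv_smul_smul] using h.smul_lowerFam hbasis hE g⁻¹

lemma MeetEquiv.setOrb_Vc_smul (hbasis : IsTopologicalBasis (Set.range A)) {α : Ordinal.{0}}
    (hE : ∀ γ, 1 ≤ γ → γ < α → BsetEquivariant G A γ) {a c : Set ℕ} {k : G}
    (hk : ∀ m ∈ c, (k : Sinf)⁻¹ m ∈ a) {y y' : X}
    (h : MeetEquiv (lowerFam G A α) (setOrb G (Vc G a) y) (setOrb G (Vc G a) y')) :
    MeetEquiv (lowerFam G A α) (setOrb G (Vc G c) (k • y)) (setOrb G (Vc G c) (k • y')) := by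
  intro B hB
  simp only [setOrb_Vc_smul_eq_biUnion hk, Set.iUnion₂_inter, Set.nonempty_biUnion]
  exact exists_congr fun u => and_congr_right fun _ => h.smul_lowerFam hbasis hE (u * k) B hB

lemma BsetEquivariant.of_canonical (hbasis : IsTopologicalBasis (Set.range A))
    {α : Ordinal.{0}} (hC : BsetCanonical G A α)
    (hE : ∀ γ, 1 ≤ γ → γ < α → BsetEquivariant G A γ) : BsetEquivariant G A α := by
  intro h σ hσ z
  ext y
  rw [Set.mem_smul_set_iff_inv_smul_mem, hC σ hσ, hC _ (compL_mem_SGfin h hσ), prng_compL,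
    setOrb_Vc_image, setOrb_Vb_compL, meetEquiv_lowerFam_smul_iff hbasis hE]

lemma smul_mem_Bset_iff (hbasis : IsTopologicalBasis (Set.range A)) {β : Ordinal.{0}}
    (hC : BsetCanonical G A β) (hE : ∀ γ, 1 ≤ γ → γ < β → BsetEquivariant G A γ)
    {σ δ : Set (ℕ × ℕ)} (hσ : σ ∈ SGfin G) (hδ : δ ∈ SGfin G) {g k : G} (hg : g ∈ Vb G σ)
    (hk : ∀ m ∈ prng δ, (k : Sinf)⁻¹ m ∈ prng σ) {x y : X} (hy : y ∈ Bset G A β σ x) (z : X) :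
    k • y ∈ Bset G A β δ z ↔ (k * g) • x ∈ Bset G A β δ z := by
  rw [hC σ hσ, setOrb_Vb_eq hg] at hy
  have hky := hy.setOrb_Vc_smul hbasis hE hk
  rw [hC δ hδ, hC δ hδ, mul_smul]
  exact ⟨hky.symm.trans, hky.trans⟩

variable {β : Ordinal.{0}} {σ δ : Set (ℕ × ℕ)} {x y z : X}

lemma setOrb_Vb_inter_nonempty_of_mem_Bset_add_one (hbasis : IsTopologicalBasis (Set.range A))
    (hβ : β ≠ 0) (hC : BsetCanonical G A β) (hE : ∀ γ, 1 ≤ γ → γ < β → BsetEquivariant G A γ)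
    (hσ : σ ∈ SGfin G) (hδ : δ ∈ SGfin G) (hy : y ∈ Bset G A (β + 1) σ x)
    (h : (setOrb G (Vc G (prng σ)) y ∩ Bset G A β δ z).Nonempty) :
    (setOrb G (Vb G σ) x ∩ Bset G A β δ z).Nonempty := by
  obtain ⟨_, ⟨k, hk, rfl⟩, hkB⟩ := h
  rw [Bset_add_one hβ, mem_BsetSucc_iff] at hy
  obtain ⟨a, ha⟩ :=
    ((finite_prng hσ).union ((finite_prng hδ).image ⇑(k : Sinf)⁻¹)).exists_finset_coe
  obtain ⟨σ', hσ', hσσ', hrng, hy'⟩ := hy.2 a (ha ▸ Set.subset_union_left)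
  obtain ⟨g, hg⟩ := exists_mem_Vb hσ'
  refine ⟨(k * g) • x, ⟨k * g, mul_mem_Vb hk (Vb_mono hσσ' hg), rfl⟩, ?_⟩
  refine (smul_mem_Bset_iff hbasis hC hE hσ' hδ hg (fun m hm => ?_) hy' z).1 hkB
  rw [hrng, ha]
  exact Or.inr ⟨m, hm, rfl⟩

lemma setOrb_Vc_inter_nonempty_of_mem_Bset_add_one (hbasis : IsTopologicalBasis (Set.range A))
    (hβ : β ≠ 0) (hC : BsetCanonical G A β) (hE : ∀ γ, 1 ≤ γ → γ < β → BsetEquivariant G A γ)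
    (hσ : σ ∈ SGfin G) (hδ : δ ∈ SGfin G) (hy : y ∈ Bset G A (β + 1) σ x)
    (h : (setOrb G (Vb G σ) x ∩ Bset G A β δ z).Nonempty) :
    (setOrb G (Vc G (prng σ)) y ∩ Bset G A β δ z).Nonempty := by
  obtain ⟨_, ⟨g₀, hg₀, rfl⟩, hB⟩ := h
  rw [Bset_add_one hβ, mem_BsetSucc_iff] at hy
  obtain ⟨b, hb⟩ :=
    ((finite_pdom hσ).union ((finite_prng hδ).image ⇑(g₀ : Sinf)⁻¹)).exists_finset_coe
  obtain ⟨σ', hσ', hσσ', hdom, hy'⟩ := hy.1 b (hb ▸ Set.subset_union_left)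
  obtain ⟨g, hg⟩ := exists_mem_Vb hσ'
  refine ⟨(g₀ * g⁻¹) • y, ⟨_, mul_inv_mem_Vc hg₀ (Vb_mono hσσ' hg), rfl⟩, ?_⟩
  rw [smul_mem_Bset_iff hbasis hC hE hσ' hδ hg (fun m hm => ?_) hy' z, inv_mul_cancel_right]
  · exact hB
  · have hm' : (g₀ : Sinf)⁻¹ m ∈ pdom σ' := by
      rw [hdom, hb]
      exact Or.inr ⟨m, hm, rfl⟩
    simpa using apply_mem_prng_of_mem_Vb hg hm'

lemma meetEquiv_of_mem_Bset_add_one (hbasis : IsTopologicalBasis (Set.range A))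
    (hβ : 1 ≤ β) (hC : BsetCanonical G A β) (hE : ∀ γ, 1 ≤ γ → γ < β → BsetEquivariant G A γ)
    (hσ : σ ∈ SGfin G) (hy : y ∈ Bset G A (β + 1) σ x) :
    MeetEquiv (lowerFam G A (β + 1)) (setOrb G (Vc G (prng σ)) y) (setOrb G (Vb G σ) x) := by
  have hβ0 : β ≠ 0 := Order.one_le_iff_ne_zero.1 hβ
  intro B hB
  rcases mem_lowerFam_add_one hB with hB | ⟨z, δ, hδ, rfl⟩
  · exact (hC σ hσ x y).1 (Bset_add_one_subset hβ0 hσ x hy) B hB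
  · exact ⟨setOrb_Vb_inter_nonempty_of_mem_Bset_add_one hbasis hβ0 hC hE hσ hδ hy,
      setOrb_Vc_inter_nonempty_of_mem_Bset_add_one hbasis hβ0 hC hE hσ hδ hy⟩

lemma bsetCanonical_add_one (hbasis : IsTopologicalBasis (Set.range A)) (hβ : 1 ≤ β)
    (hC : BsetCanonical G A β) (hE : ∀ γ, 1 ≤ γ → γ ≤ β → BsetEquivariant G A γ) :
    BsetCanonical G A (β + 1) := fun _ hσ _ _ =>
  ⟨meetEquiv_of_mem_Bset_add_one hbasis hβ hC (fun γ h1 hγ => hE γ h1 hγ.le) hσ,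
    mem_Bset_add_one_of_meetEquiv hβ hC (hE β hβ le_rfl) hσ⟩

end Canonical

theorem bsetCanonical_and_equivariant {G : Subgroup Sinf} {X : Type*} [TopologicalSpace X]
    [MulAction G X] [ContinuousConstSMul G X] {A : ℕ → Set X}
    (hbasis : IsTopologicalBasis (Set.range A)) (α : Ordinal.{0}) (hα : 1 ≤ α) :
    BsetCanonical G A α ∧ BsetEquivariant G A α := by
  induction α using WellFoundedLT.induction with | _ α IH => ?_
  have hC : BsetCanonical G A α := by
    rcases Ordinal.zero_or_succ_or_isSuccLimit α with rfl | ⟨β, rfl⟩ | hlim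
    · exact absurd hα (by simp)
    · rw [Order.succ_eq_add_one] at IH ⊢
      rcases eq_or_ne β 0 with rfl | hβ
      · rw [zero_add]
        exact bsetCanonical_one
      · have hβ1 := Order.one_le_iff_ne_zero.2 hβ
        exact bsetCanonical_add_one hbasis hβ1 (IH β (lt_add_one β) hβ1).1
          fun γ h1 hγ => (IH γ (Order.lt_add_one_iff.2 hγ) h1).2
    · exact bsetCanonical_of_isSuccLimit hlim fun β h1 hβ => (IH β hβ h1).1
  exact ⟨hC, .of_canonical hbasis hC fun γ h1 hγ => (IH γ hγ h1).2⟩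

theorem alphaSet_canonical_recursion_general
    (G : Subgroup Sinf)
    {X : Type*} [TopologicalSpace X] [MulAction G X] [ContinuousSMul G X]
    (A : ℕ → Set X) (hbasis : TopologicalSpace.IsTopologicalBasis (Set.range A))
    (hbasisInv : ∀ l, ∃ c : Finset ℕ, ∀ g ∈ Vc G (↑c : Set ℕ), g • A l = A l)
    (x : X) (σ : Set (ℕ × ℕ)) (hσ : σ ∈ SGfin G)
    (α : Ordinal.{0}) (hα : 1 ≤ α)
    (Ba Blt : Set (Set X))
    (hBa : Ba = {B | ∃ y : X, ∃ δ ∈ SGfin G, B = Bset G A α δ y})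
    (hBlt : Blt = {B | (∃ l, B = A l) ∨
        ∃ γ : Ordinal.{0}, 1 ≤ γ ∧ γ < α ∧ ∃ y : X, ∃ δ ∈ SGfin G, B = Bset G A γ δ y}) :
    (Bset G A (α + 1) σ x =
      (⋂ B ∈ Ba, ⋂ (_ : (setOrb G (Vb G σ) x ∩ B).Nonempty), setSmul G (Vc G (prng σ)) B) ∩
        (⋂ B ∈ Ba, ⋂ (_ : setOrb G (Vb G σ) x ∩ B = ∅), (setSmul G (Vc G (prng σ)) B)ᶜ)) ∧
    (Bset G A α σ x =
      (⋂ B ∈ Blt, ⋂ (_ : (setOrb G (Vb G σ) x ∩ B).Nonempty), setSmul G (Vc G (prng σ)) B) ∩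
        (⋂ B ∈ Blt, ⋂ (_ : setOrb G (Vb G σ) x ∩ B = ∅), (setSmul G (Vc G (prng σ)) B)ᶜ)) := by
  have hC (γ : Ordinal.{0}) (hγ : 1 ≤ γ) : BsetCanonical G A γ :=
    (bsetCanonical_and_equivariant hbasis γ hγ).1
  subst hBa hBlt
  rw [biInter_setSmul_inter_biInter_compl, biInter_setSmul_inter_biInter_compl]
  refine ⟨Set.ext fun y => ?_, Set.ext fun y => hC α hα σ hσ x y⟩
  rw [hC (α + 1) le_add_self σ hσ x y]
  exact meetEquiv_lowerFam_add_one_iff hbasisInv hα fun γ hγ _ => hC γ hγ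

/-- Canonical-partition form of the recursion. -/
theorem alphaSet_canonical_recursion
    (G : Subgroup Sinf) (hGclosed : IsClosed (G : Set Sinf))
    {X : Type*} [TopologicalSpace X] [PolishSpace X] [MulAction G X] [ContinuousSMul G X]
    (A : ℕ → Set X) (hbasis : TopologicalSpace.IsTopologicalBasis (Set.range A))
    (hbasisInv : ∀ l, ∃ c : Finset ℕ, ∀ g ∈ Vc G (↑c : Set ℕ), g • A l = A l)
    (x : X) (σ : Set (ℕ × ℕ)) (hσ : σ ∈ SGfin G)
    (α : Ordinal.{0}) (hα : 1 ≤ α) (hαc : α.card ≤ Cardinal.aleph0)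
    (Ba Blt : Set (Set X))
    (hBa : Ba = {B | ∃ y : X, ∃ δ ∈ SGfin G, B = Bset G A α δ y})
    (hBlt : Blt = {B | (∃ l, B = A l) ∨
        ∃ γ : Ordinal.{0}, 1 ≤ γ ∧ γ < α ∧ ∃ y : X, ∃ δ ∈ SGfin G, B = Bset G A γ δ y}) :
    (Bset G A (α + 1) σ x =
      (⋂ B ∈ Ba, ⋂ (_ : (setOrb G (Vb G σ) x ∩ B).Nonempty), setSmul G (Vc G (prng σ)) B) ∩
        (⋂ B ∈ Ba, ⋂ (_ : setOrb G (Vb G σ) x ∩ B = ∅), (setSmul G (Vc G (prng σ)) B)ᶜ)) ∧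
    (Bset G A α σ x =
      (⋂ B ∈ Blt, ⋂ (_ : (setOrb G (Vb G σ) x ∩ B).Nonempty), setSmul G (Vc G (prng σ)) B) ∩
        (⋂ B ∈ Blt, ⋂ (_ : setOrb G (Vb G σ) x ∩ B = ∅), (setSmul G (Vc G (prng σ)) B)ᶜ)) :=
  alphaSet_canonical_recursion_general G A hbasis hbasisInv x σ hσ α hα Ba Blt hBa hBlt
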